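/- Let d ≥ 1 and let {Π_i}_{i=1}^{d²} be d×d complex matrices such that each Π_i is a Hermitian projection (Π_i² = Π_i = Π_i†) of trace 1, with tr(Π_iΠ_j) = (dδ_{ij} + 1)/(d+1) for all i, j, and Σ_i Π_i = d·I. Define F_j := (√(d+1)/d)·Π_j + ((1 − √(d+1))/d²)·I. Then {F_j} is an unbiased Wigner basis: each F_j is Hermitian, Σ_j F_j = I, tr F_j = 1/d, and tr(F_iF_j) = (1/d)·δ_{ij} (in particular the family is linearly independent). -/

import Mathlib

open Matrix BigOperators
open scoped ComplexOrder Kronecker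

/-- A measure basis: a linearly independent family of `d²` Hermitian `d×d` complex
matrices summing to the identity, with nonnegative traces. -/
def IsMeasureBasis {d : ℕ} (L : Fin (d ^ 2) → Matrix (Fin d) (Fin d) ℂ) : Prop :=
  (∀ i, (L i).IsHermitian) ∧ LinearIndependent ℝ L ∧ (∑ i, L i) = 1 ∧ ∀ i, 0 ≤ ((L i).trace).re

/-- A Wigner basis: an orthogonal measure basis. -/
def IsWignerBasis {d : ℕ} (L : Fin (d ^ 2) → Matrix (Fin d) (Fin d) ℂ) : Prop :=
  IsMeasureBasis L ∧ ∀ i j, i ≠ j → (L i * L j).trace = 0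

/-- The rescaled frame operator `S_L(X) = ∑ⱼ (tr(X Lⱼ)/lⱼ) Lⱼ`. -/
noncomputable def rsFrameOp {n : Type*} [Fintype n] {m : Type*} [Fintype m] [DecidableEq m]
    (L : n → Matrix m m ℂ) (X : Matrix m m ℂ) : Matrix m m ℂ :=
  ∑ j, (((X * L j).trace) / ((L j).trace)) • L j

/-- A map on matrices that is ℝ-linear, Hermiticity-preserving, self-adjoint with respect to
the Hilbert–Schmidt inner product on Hermitian matrices, and positive. -/
def IsPosSelfAdjMap {m : Type*} [Fintype m]
    (T : Matrix m m ℂ → Matrix m m ℂ) : Prop :=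
  IsLinearMap ℝ T ∧ (∀ X, X.IsHermitian → (T X).IsHermitian) ∧
  (∀ X Y, X.IsHermitian → Y.IsHermitian → (T X * Y).trace = (X * T Y).trace) ∧
  (∀ X, X.IsHermitian → 0 ≤ ((X * T X).trace).re)

/-- `T` is the (unique) positive self-adjoint inverse square root of the rescaled frame
operator of `L`, i.e. `S_L ∘ T ∘ T = id` on Hermitian matrices; `PW(L) i = T (L i)`. -/
def IsInvSqrtOfFrameOp {n : Type*} [Fintype n] {m : Type*} [Fintype m] [DecidableEq m]
    (L : n → Matrix m m ℂ) (T : Matrix m m ℂ → Matrix m m ℂ) : Prop :=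
  IsPosSelfAdjMap T ∧ ∀ X : Matrix m m ℂ, X.IsHermitian → rsFrameOp L (T (T X)) = X

/-!
With `a = √(d+1)/d` and `b = (1-√(d+1))/d²`, every quantity attached to `Fⱼ = a Πⱼ + b I`
is a polynomial in `a`, `b` and the SIC data. The coefficients are chosen so that `a² = (d+1)/d²`
cancels the denominator of the SIC Gram matrix while `2ab + b²d = (1 - (d+1))/d³ = -1/d²` removes
its constant off-diagonal part, leaving `tr(FᵢFⱼ) = δᵢⱼ/d`. Orthogonality with nonzero norms then
gives linear independence.
-/

section TraceForm

variable {ι K m : Type*} [Fintype ι] [Field K] [Fintype m]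

theorem Matrix.linearIndependent_of_trace_mul_orthogonal {L : ι → Matrix m m K}
    (hdiag : ∀ i, (L i * L i).trace ≠ 0) (horth : Pairwise fun i j => (L i * L j).trace = 0) :
    LinearIndependent K L := by
  classical
  rw [Fintype.linearIndependent_iff]
  intro g hg k
  have hzero : ∑ i, g i * (L i * L k).trace = 0 := by
    simpa [Finset.sum_mul, Matrix.trace_sum] using congrArg (fun X => (X * L k).trace) hg
  rw [Finset.sum_eq_single k (fun i _ hik => by rw [horth hik, mul_zero])
    (fun hk => absurd (Finset.mem_univ k) hk)] at hzero
  exact (mul_eq_zero.mp hzero).resolve_right (hdiag k)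

end TraceForm

section AffineShift

variable {m : Type*} [DecidableEq m]

theorem Matrix.IsHermitian.real_smul_add_smul_one {P : Matrix m m ℂ} (hP : P.IsHermitian)
    (a b : ℝ) : (a • P + b • (1 : Matrix m m ℂ)).IsHermitian :=
  (hP.smul (IsSelfAdjoint.all a)).add (isHermitian_one.smul (IsSelfAdjoint.all b))

variable [Fintype m]

theorem Matrix.trace_real_smul_add_smul_one (a b : ℝ) (P : Matrix m m ℂ) :
    (a • P + b • (1 : Matrix m m ℂ)).trace = a * P.trace + b * Fintype.card m := by
  simp [Matrix.trace_add, Matrix.trace_smul, Complex.real_smul]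

theorem Matrix.trace_mul_real_smul_add_smul_one (a b : ℝ) (P Q : Matrix m m ℂ) :
    ((a • P + b • (1 : Matrix m m ℂ)) * (a • Q + b • 1)).trace =
      a ^ 2 * (P * Q).trace + a * b * (P.trace + Q.trace) + b ^ 2 * Fintype.card m := by
  simp only [add_mul, mul_add, Matrix.smul_mul, Matrix.mul_smul, Matrix.one_mul, Matrix.mul_one,
    smul_smul, Matrix.trace_add, Matrix.trace_smul, Matrix.trace_one, Complex.real_smul]
  push_cast
  ring

end AffineShift

theorem sic_gram_coeff {d s : ℝ} (hd : 0 < d) (hs : s ^ 2 = d + 1) (δ : ℝ) :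
    (s / d) ^ 2 * ((d * δ + 1) / (d + 1)) + s / d * ((1 - s) / d ^ 2) * 2 +
      ((1 - s) / d ^ 2) ^ 2 * d = δ / d := by
  have hd1 : d + 1 ≠ 0 := by positivity
  field_simp
  linear_combination (d ^ 2 * δ - 1) * hs

theorem sic_principal_wigner_basis {d : ℕ} [NeZero d]
    (P : Fin (d ^ 2) → Matrix (Fin d) (Fin d) ℂ)
    (hPherm : ∀ i, (P i).IsHermitian)
    (hPtr : ∀ i, (P i).trace = 1)
    (hPgram : ∀ i j, (P i * P j).trace =
      (((((d : ℝ) * (if i = j then 1 else 0) + 1) / ((d : ℝ) + 1)) : ℝ) : ℂ))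
    (hPsum : ∑ i, P i = (d : ℂ) • (1 : Matrix (Fin d) (Fin d) ℂ))
    (F : Fin (d ^ 2) → Matrix (Fin d) (Fin d) ℂ)
    (hFdef : ∀ j, F j = ((Real.sqrt ((d : ℝ) + 1) / (d : ℝ)) : ℝ) • P j +
      (((1 - Real.sqrt ((d : ℝ) + 1)) / (d : ℝ) ^ 2) : ℝ) • (1 : Matrix (Fin d) (Fin d) ℂ)) :
    (∀ j, (F j).IsHermitian) ∧
    (∑ j, F j) = 1 ∧
    (∀ j, (F j).trace = ((d : ℂ))⁻¹) ∧
    (∀ i j, (F i * F j).trace = if i = j then ((d : ℂ))⁻¹ else 0) ∧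
    LinearIndependent ℝ F := by
  have hd : (0 : ℝ) < d := Nat.cast_pos.mpr (Nat.pos_of_neZero d)
  have hd0 : (d : ℂ) ≠ 0 := by exact_mod_cast hd.ne'
  have hs : Real.sqrt ((d : ℝ) + 1) ^ 2 = d + 1 := Real.sq_sqrt (by positivity)
  have hgram : ∀ i j, (F i * F j).trace = if i = j then ((d : ℂ))⁻¹ else 0 := by
    intro i j
    have key := sic_gram_coeff hd hs (if i = j then 1 else 0)
    rw [hFdef, hFdef, trace_mul_real_smul_add_smul_one, hPgram, hPtr, hPtr, Fintype.card_fin,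
      one_add_one_eq_two]
    split_ifs at key ⊢ <;> simpa using congrArg (fun x : ℝ => (x : ℂ)) key
  refine ⟨fun j => hFdef j ▸ (hPherm j).real_smul_add_smul_one _ _, ?_, fun j => ?_, hgram, ?_⟩
  · simp only [hFdef, Finset.sum_add_distrib, ← Finset.smul_sum, hPsum, Finset.sum_const,
      Finset.card_univ, Fintype.card_fin]
    rw [← Nat.cast_smul_eq_nsmul ℂ, ← Complex.coe_smul, ← Complex.coe_smul, smul_smul, smul_smul,
      ← add_smul]
    convert one_smul ℂ (1 : Matrix (Fin d) (Fin d) ℂ)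
    push_cast
    field_simp
    ring
  · rw [hFdef, trace_real_smul_add_smul_one, hPtr, Fintype.card_fin]
    push_cast
    field_simp
    ring
  · refine (Matrix.linearIndependent_of_trace_mul_orthogonal (fun i => ?_)
      (fun i j hij => by simpa [hij] using hgram i j)).restrict_scalars' ℝ
    simpa [hgram] using NeZero.ne d
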